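/- arXiv:1004.2588 — 7 statements merged into one kernel-verified Lean document; each statement's English description precedes it below -/
import Mathlib

section
/- For a Poisson random variable Z with parameter λ, the centered moments satisfy E[(Z − λ)^n] = Σ_{a=0}^{n} λ^a S_2(n,a), where S_2(n,a) is the number of partitions of a set of size n into a subsets each of size at least 2. -/
/-- `S2 n a` is the number of partitions of an `n`-element set into `a` blocks,
each block of cardinality at least 2 (associated Stirling numbers of the second kind). -/
noncomputable def S2 (n a : ℕ) : ℕ :=
  Set.ncard {P : Finset (Finset (Fin n)) |
    P.card = a ∧ (∀ B ∈ P, 2 ≤ B.card) ∧ ∀ x : Fin n, ∃! B, B ∈ P ∧ x ∈ B}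

/-!
Write `M n` for the `n`-th central moment of `Z`. The Stein–Chen identity
`E[Z f(Z)] = λ E[f(Z + 1)]` with `f z = (z - λ)^n` gives
`M (n + 1) + λ M n = λ E[(Z - λ + 1)^n]`, that is `M (n + 1) = λ ∑_{j < n} C(n, j) M j`,
with `M 0 = 1`. The sum of `λ^(number of blocks)` over the singleton-free partitions of an
`m`-set satisfies the same recursion: in a partition of `insert x s` the block of `x` is
`insert x (s \ T)` for some `T ⊂ s`, and the remaining blocks form a singleton-free partition
of `T`. Grouping the partitions of `Fin n` by their number of blocks turns this sum into
`∑ₐ λ^a S2 n a`.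
-/

open Finset
open scoped Nat

lemma Finset.sum_ssubsets_apply_card {β M : Type*} [DecidableEq β] [AddCancelCommMonoid M]
    (f : ℕ → M) (t : Finset β) :
    ∑ T ∈ t.ssubsets, f #T = ∑ j ∈ range #t, (#t).choose j • f j := by
  have h := sum_powerset_apply_card f (x := t)
  rw [← sum_erase_add _ _ (mem_powerset_self t), sum_range_succ, Nat.choose_self, one_smul] at h
  exact add_right_cancel h

noncomputable def poissonWeight (lam : ℝ) (k : ℕ) : ℝ := Real.exp (-lam) * lam ^ k / k !

noncomputable def poissonCentralMoment (lam : ℝ) (n : ℕ) : ℝ :=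
  ∑' k : ℕ, poissonWeight lam k * ((k : ℝ) - lam) ^ n

lemma poissonWeight_succ_mul (lam : ℝ) (k : ℕ) :
    poissonWeight lam (k + 1) * ((k + 1 : ℕ) : ℝ) = lam * poissonWeight lam k := by
  have : (k ! : ℝ) ≠ 0 := mod_cast k.factorial_ne_zero
  simp only [poissonWeight, Nat.factorial_succ]
  push_cast
  field_simp
  ring

lemma hasSum_poissonWeight (lam : ℝ) : HasSum (poissonWeight lam) 1 := by
  have h := (NormedSpace.expSeries_div_hasSum_exp lam).mul_left (Real.exp (-lam))
  rw [← Real.exp_eq_exp_ℝ, ← Real.exp_add, neg_add_cancel, Real.exp_zero] at h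
  exact h.congr_fun fun k => mul_div_assoc _ _ _

lemma summable_poissonWeight_mul_pow (lam c : ℝ) (i : ℕ) :
    Summable fun k : ℕ => poissonWeight lam k * ((k : ℝ) + c) ^ i := by
  induction i generalizing c with
  | zero => simpa using (hasSum_poissonWeight lam).summable
  | succ i ih =>
    rw [← summable_nat_add_iff 1]
    have hsplit : ∀ k : ℕ, poissonWeight lam (k + 1) * (((k + 1 : ℕ) : ℝ) + c) ^ (i + 1) =
        lam * (poissonWeight lam k * ((k : ℝ) + (1 + c)) ^ i) +
          c * (poissonWeight lam (k + 1) * (((k + 1 : ℕ) : ℝ) + c) ^ i) := by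
      intro k
      calc _ = poissonWeight lam (k + 1) * ((k + 1 : ℕ) : ℝ) * (((k + 1 : ℕ) : ℝ) + c) ^ i +
            c * (poissonWeight lam (k + 1) * (((k + 1 : ℕ) : ℝ) + c) ^ i) := by ring
        _ = _ := by rw [poissonWeight_succ_mul]; push_cast; ring
    simp only [hsplit]
    exact ((ih (1 + c)).mul_left lam).add (((summable_nat_add_iff 1).2 (ih c)).mul_left c)

lemma tsum_poissonWeight_mul_cast_mul (lam : ℝ) {f : ℕ → ℝ}
    (hf : Summable fun k => poissonWeight lam k * f (k + 1)) :
    ∑' k : ℕ, poissonWeight lam k * k * f k =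
      lam * ∑' k : ℕ, poissonWeight lam k * f (k + 1) := by
  have hshift : ∀ k : ℕ, poissonWeight lam (k + 1) * ((k + 1 : ℕ) : ℝ) * f (k + 1) =
      lam * (poissonWeight lam k * f (k + 1)) := fun k => by
    rw [poissonWeight_succ_mul, mul_assoc]
  rw [tsum_eq_zero_add' (by simpa only [hshift] using hf.mul_left lam)]
  simp only [hshift, tsum_mul_left, CharP.cast_eq_zero, mul_zero, zero_mul, zero_add]

lemma poissonCentralMoment_zero (lam : ℝ) : poissonCentralMoment lam 0 = 1 := by
  simpa only [poissonCentralMoment, pow_zero, mul_one] using (hasSum_poissonWeight lam).tsum_eq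

lemma poissonCentralMoment_succ (lam : ℝ) (n : ℕ) :
    poissonCentralMoment lam (n + 1) =
      lam * ∑ j ∈ range n, (n.choose j : ℝ) * poissonCentralMoment lam j := by
  have hsum (i : ℕ) : Summable fun k : ℕ => poissonWeight lam k * ((k : ℝ) - lam) ^ i := by
    simpa only [sub_eq_add_neg] using summable_poissonWeight_mul_pow lam (-lam) i
  have hleft : ∑' k : ℕ, poissonWeight lam k * k * ((k : ℝ) - lam) ^ n =
      poissonCentralMoment lam (n + 1) + lam * poissonCentralMoment lam n := by
    rw [poissonCentralMoment, poissonCentralMoment, ← tsum_mul_left,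
      ← (hsum (n + 1)).tsum_add ((hsum n).mul_left lam)]
    congr 1 with k
    ring
  have hright : ∑' k : ℕ, poissonWeight lam k * (((k + 1 : ℕ) : ℝ) - lam) ^ n =
      ∑ j ∈ range (n + 1), (n.choose j : ℝ) * poissonCentralMoment lam j := by
    simp_rw [poissonCentralMoment, ← tsum_mul_left]
    rw [← Summable.tsum_finsetSum fun j _ => (hsum j).mul_left _]
    congr 1 with k
    rw [Nat.cast_succ, add_sub_right_comm, add_pow, mul_sum]
    refine sum_congr rfl fun j _ => ?_
    ring
  have hshift : Summable fun k : ℕ => poissonWeight lam k * (((k + 1 : ℕ) : ℝ) - lam) ^ n :=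
    (summable_poissonWeight_mul_pow lam (1 - lam) n).congr fun k => by push_cast; ring
  have hstein :=
    tsum_poissonWeight_mul_cast_mul lam (f := fun m : ℕ => ((m : ℝ) - lam) ^ n) hshift
  beta_reduce at hstein
  rw [hleft, hright, sum_range_succ, Nat.choose_self, Nat.cast_one, one_mul, mul_add] at hstein
  linarith

variable {α : Type*}

def IsSingletonFreePartition (s : Finset α) (P : Finset (Finset α)) : Prop :=
  (∀ B ∈ P, 2 ≤ #B ∧ B ⊆ s) ∧ ∀ x ∈ s, ∃! B, B ∈ P ∧ x ∈ B

open Classical in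
noncomputable def singletonFreePartitions (s : Finset α) : Finset (Finset (Finset α)) :=
  s.powerset.powerset.filter (IsSingletonFreePartition s)

lemma mem_singletonFreePartitions {s : Finset α} {P : Finset (Finset α)} :
    P ∈ singletonFreePartitions s ↔ IsSingletonFreePartition s P := by
  simp only [singletonFreePartitions, mem_filter, mem_powerset, and_iff_right_iff_imp]
  exact fun hP B hB => mem_powerset.2 (hP.1 B hB).2

namespace IsSingletonFreePartition

variable {s T T' B B' : Finset α} {P Q Q' : Finset (Finset α)} {x y : α}

lemma eq_of_mem_of_mem (hP : IsSingletonFreePartition s P) (hB : B ∈ P) (hB' : B' ∈ P)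
    (hy : y ∈ B) (hy' : y ∈ B') : B = B' :=
  (hP.2 y ((hP.1 B hB).2 hy)).unique ⟨hB, hy⟩ ⟨hB', hy'⟩

variable [DecidableEq α]

lemma card_le (hP : IsSingletonFreePartition s P) : #P ≤ #s := by
  calc #P ≤ #(P.biUnion id) :=
        card_le_card_biUnion (fun B hB B' hB' hne => disjoint_left.2 fun y hy hy' =>
          hne (hP.eq_of_mem_of_mem hB hB' hy hy'))
          fun B hB => card_pos.1 (by have := (hP.1 B hB).1; simp only [id]; omega)
    _ ≤ #s := card_le_card (biUnion_subset.2 fun B hB => (hP.1 B hB).2)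

lemma insert_notMem (hQ : IsSingletonFreePartition T Q) (hx : x ∉ T) (U : Finset α) :
    insert x U ∉ Q :=
  fun h => hx ((hQ.1 _ h).2 (mem_insert_self _ _))

lemma insert_insert_sdiff (hx : x ∉ s) (hT : T ⊂ s) (hQ : IsSingletonFreePartition T Q) :
    IsSingletonFreePartition (insert x s) (insert (insert x (s \ T)) Q) := by
  have hxT : x ∉ T := fun h => hx (hT.1 h)
  refine ⟨fun B hB => ?_, fun z hz => ?_⟩
  · rcases mem_insert.1 hB with rfl | hB
    · have hne : 0 < #(s \ T) := card_pos.2 (sdiff_nonempty.2 (not_subset_of_ssubset hT))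
      rw [card_insert_of_notMem fun h => hx (mem_sdiff.1 h).1]
      exact ⟨by omega, insert_subset_insert x sdiff_subset⟩
    · exact ⟨(hQ.1 B hB).1, (hQ.1 B hB).2.trans (hT.1.trans (subset_insert x s))⟩
  · by_cases hzT : z ∈ T
    · obtain ⟨C, ⟨hC, hzC⟩, hun⟩ := hQ.2 z hzT
      refine ⟨C, ⟨mem_insert_of_mem hC, hzC⟩, fun B ⟨hB, hzB⟩ => ?_⟩
      rcases mem_insert.1 hB with rfl | hB
      · simp only [mem_insert, mem_sdiff, hzT, not_true_eq_false, and_false, or_false] at hzB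
        exact absurd (hzB ▸ hzT) hxT
      · exact hun B ⟨hB, hzB⟩
    · refine ⟨insert x (s \ T), ⟨mem_insert_self _ _, ?_⟩, fun B ⟨hB, hzB⟩ => ?_⟩
      · simp only [mem_insert, mem_sdiff] at hz ⊢
        tauto
      · rcases mem_insert.1 hB with rfl | hB
        · rfl
        · exact absurd ((hQ.1 B hB).2 hzB) hzT

lemma eq_of_insert_insert_sdiff_eq (hx : x ∉ s) (hT : T ⊆ s) (hT' : T' ⊆ s)
    (hQ : IsSingletonFreePartition T Q) (hQ' : IsSingletonFreePartition T' Q')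
    (h : insert (insert x (s \ T)) Q = insert (insert x (s \ T')) Q') : T = T' ∧ Q = Q' := by
  have hblocks : insert x (s \ T) = insert x (s \ T') :=
    (mem_insert.1 (h ▸ mem_insert_self _ Q)).resolve_right
      (hQ'.insert_notMem (notMem_mono hT' hx) _)
  have hxs : ∀ {U}, x ∉ s \ U := fun hxU => hx (mem_sdiff.1 hxU).1
  have hsdiff : s \ T = s \ T' := by
    rw [← erase_insert (hxs (U := T)), hblocks, erase_insert hxs]
  obtain rfl : T = T' := by
    rw [← Finset.sdiff_sdiff_eq_self hT, ← Finset.sdiff_sdiff_eq_self hT', hsdiff]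
  refine ⟨rfl, ?_⟩
  have hxT := notMem_mono hT hx
  rw [← erase_insert (hQ.insert_notMem hxT (s \ T)), ← erase_insert (hQ'.insert_notMem hxT _),
    h]

lemma erase (hx : x ∉ s) (hP : IsSingletonFreePartition (insert x s) P) (hB : B ∈ P)
    (hxB : x ∈ B) : s \ B ⊂ s ∧ IsSingletonFreePartition (s \ B) (P.erase B) := by
  obtain ⟨y, hyB, hyx⟩ := exists_mem_ne (hP.1 B hB).1 x
  have hys : y ∈ s := (mem_insert.1 ((hP.1 B hB).2 hyB)).resolve_left hyx
  refine ⟨(ssubset_iff_of_subset sdiff_subset).2 ⟨y, hys, fun h => (mem_sdiff.1 h).2 hyB⟩,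
    fun C hC => ⟨(hP.1 C (mem_of_mem_erase hC)).1, fun z hzC => ?_⟩, fun z hz => ?_⟩
  · have hzB : z ∉ B := fun hzB =>
      ne_of_mem_erase hC (hP.eq_of_mem_of_mem (mem_of_mem_erase hC) hB hzC hzB)
    have hzs := (hP.1 C (mem_of_mem_erase hC)).2 hzC
    exact mem_sdiff.2 ⟨(mem_insert.1 hzs).resolve_left (by rintro rfl; exact hzB hxB), hzB⟩
  · obtain ⟨C, ⟨hC, hzC⟩, hun⟩ := hP.2 z (mem_insert_of_mem (mem_sdiff.1 hz).1)
    have hCB : C ≠ B := by rintro rfl; exact (mem_sdiff.1 hz).2 hzC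
    exact ⟨C, ⟨mem_erase.2 ⟨hCB, hC⟩, hzC⟩,
      fun D ⟨hD, hzD⟩ => hun D ⟨mem_of_mem_erase hD, hzD⟩⟩

end IsSingletonFreePartition

lemma singletonFreePartitions_empty : singletonFreePartitions (∅ : Finset α) = {∅} := by
  ext P
  rw [mem_singletonFreePartitions, mem_singleton]
  constructor
  · intro hP
    refine eq_empty_of_forall_notMem fun B hB => ?_
    have hB' := hP.1 B hB
    rw [subset_empty.1 hB'.2, card_empty] at hB'
    omega
  · rintro rfl
    exact ⟨by simp, by simp⟩

section Weight

variable {R : Type*}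

noncomputable def singletonFreeWeight [CommSemiring R] (r : R) (s : Finset α) : R :=
  ∑ P ∈ singletonFreePartitions s, r ^ #P

variable [DecidableEq α]

lemma singletonFreeWeight_insert [CommSemiring R] (r : R) {s : Finset α} {x : α} (hx : x ∉ s) :
    singletonFreeWeight r (insert x s) = r * ∑ T ∈ s.ssubsets, singletonFreeWeight r T := by
  simp only [singletonFreeWeight, mul_sum, sum_sigma']
  symm
  refine sum_bij (fun q _ => insert (insert x (s \ q.1)) q.2) ?_ ?_ ?_ ?_
  · rintro ⟨T, Q⟩ hq
    rw [mem_sigma, mem_ssubsets, mem_singletonFreePartitions] at hq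
    exact mem_singletonFreePartitions.2 (hq.2.insert_insert_sdiff hx hq.1)
  · rintro ⟨T, Q⟩ hq ⟨T', Q'⟩ hq' h
    rw [mem_sigma, mem_ssubsets, mem_singletonFreePartitions] at hq hq'
    obtain ⟨rfl, rfl⟩ :=
      IsSingletonFreePartition.eq_of_insert_insert_sdiff_eq hx hq.1.1 hq'.1.1 hq.2 hq'.2 h
    rfl
  · intro P hP
    rw [mem_singletonFreePartitions] at hP
    obtain ⟨B, ⟨hB, hxB⟩, -⟩ := hP.2 x (mem_insert_self x s)
    obtain ⟨hsub, hQ⟩ := hP.erase hx hB hxB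
    have hBeq : insert x (s \ (s \ B)) = B := by
      have := (hP.1 B hB).2
      ext z
      simp only [mem_insert, mem_sdiff, subset_iff] at this ⊢
      grind
    refine ⟨⟨s \ B, P.erase B⟩, ?_, ?_⟩
    · rw [mem_sigma, mem_ssubsets, mem_singletonFreePartitions]
      exact ⟨hsub, hQ⟩
    · simp only [hBeq, insert_erase hB]
  · rintro ⟨T, Q⟩ hq
    rw [mem_sigma, mem_ssubsets, mem_singletonFreePartitions] at hq
    rw [card_insert_of_notMem (hq.2.insert_notMem (notMem_mono hq.1.1 hx) _), pow_succ']

lemma singletonFreeWeight_eq_sum_card [CommSemiring R] (r : R) (s : Finset α) :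
    singletonFreeWeight r s =
      ∑ a ∈ range (#s + 1), r ^ a * #{P ∈ singletonFreePartitions s | #P = a} := by
  rw [singletonFreeWeight, ← sum_fiberwise_of_maps_to (g := card) fun P hP =>
    mem_range.2 (Nat.lt_succ_of_le (mem_singletonFreePartitions.1 hP).card_le)]
  refine sum_congr rfl fun a _ => ?_
  rw [sum_congr rfl fun P hP => by rw [(mem_filter.1 hP).2], sum_const, nsmul_eq_mul, mul_comm]

lemma singletonFreeWeight_eq_of_recurrence [CommRing R] (r : R) {M : ℕ → R}
    (h0 : M 0 = 1) (hsucc : ∀ m, M (m + 1) = r * ∑ j ∈ range m, (m.choose j : R) * M j)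
    (s : Finset α) : singletonFreeWeight r s = M #s := by
  induction s using Finset.strongInduction with
  | H s ih =>
    rcases s.eq_empty_or_nonempty with rfl | ⟨x, hx⟩
    · simp [singletonFreeWeight, singletonFreePartitions_empty, h0]
    · have hxs := notMem_erase x s
      rw [← insert_erase hx, singletonFreeWeight_insert r hxs, card_insert_of_notMem hxs, hsucc,
        sum_congr rfl fun T hT => ih T ((mem_ssubsets.1 hT).trans (erase_ssubset hx)),
        sum_ssubsets_apply_card]
      simp only [nsmul_eq_mul]

end Weight

lemma S2_eq_card_filter (n a : ℕ) :
    S2 n a = #{P ∈ singletonFreePartitions (univ : Finset (Fin n)) | #P = a} := by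
  rw [S2, ← Set.ncard_coe_finset]
  congr 1
  ext P
  simp only [coe_filter, Set.mem_ofPred_eq, mem_singletonFreePartitions, IsSingletonFreePartition,
    subset_univ, and_true, mem_univ, forall_const]
  tauto

theorem poisson_centered_moment_eq_sum_S2_general (lam : ℝ) (n : ℕ) :
    (∑' k : ℕ, (Real.exp (-lam) * lam ^ k / (Nat.factorial k : ℝ)) * ((k : ℝ) - lam) ^ n)
      = ∑ a ∈ Finset.range (n + 1), lam ^ a * (S2 n a : ℝ) := by
  calc _ = poissonCentralMoment lam n := rfl
    _ = singletonFreeWeight lam (univ : Finset (Fin n)) := by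
      rw [singletonFreeWeight_eq_of_recurrence lam (poissonCentralMoment_zero lam)
        (poissonCentralMoment_succ lam), card_univ, Fintype.card_fin]
    _ = _ := by
      simp only [singletonFreeWeight_eq_sum_card, card_univ, Fintype.card_fin, S2_eq_card_filter]

/-- For a Poisson random variable `Z` with parameter `lam`, the centered moments satisfy
`E[(Z - lam)^n] = ∑_{a=0}^{n} lam^a * S2 n a`. -/
theorem poisson_centered_moment_eq_sum_S2 (lam : ℝ) (hlam : 0 < lam) (n : ℕ) :
    (∑' k : ℕ, (Real.exp (-lam) * lam ^ k / (Nat.factorial k : ℝ)) * ((k : ℝ) - lam) ^ n)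
      = ∑ a ∈ Finset.range (n + 1), lam ^ a * (S2 n a : ℝ) :=
  poisson_centered_moment_eq_sum_S2_general lam n
end

section
/- For all 0 ≤ a ≤ n, the associated Stirling numbers of the second kind satisfy S_2(n,a) = Σ_{c=0}^{a} (−1)^c C(n,c) S(n−c, a−c), where S(m,k) is the ordinary Stirling number of the second kind. -/
/-- `S n a` is the ordinary Stirling number of the second kind: the number of
partitions of an `n`-element set into `a` nonempty blocks. -/
noncomputable def S (n a : ℕ) : ℕ :=
  Set.ncard {P : Finset (Finset (Fin n)) |
    P.card = a ∧ (∀ B ∈ P, 1 ≤ B.card) ∧ ∀ x : Fin n, ∃! B, B ∈ P ∧ x ∈ B}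

/-!
Sign each partition `P` of an `n`-set into `a` nonempty blocks by its singleton blocks: if `P` has
`m` of them, it contributes `∑_c (-1)^c C(m, c)`, which is `1` if `m = 0` and `0` otherwise, so the
signed count is `S2 n a`. Summing in the other order, `P` together with a `c`-set `E` of points that
are singleton blocks of `P` is the same as a choice of `E` (`C(n, c)` ways) and a partition of the
remaining `n - c` points into `a - c` nonempty blocks.
-/

open Finset

section

variable {α β : Type*} [DecidableEq α] [DecidableEq β]

open Classical in
noncomputable def partitionsOn (s : Finset α) (k a : ℕ) : Finset (Finset (Finset α)) :=
  {P ∈ s.powerset.powerset | #P = a ∧ (∀ B ∈ P, k ≤ #B) ∧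
    (P : Set (Finset α)).PairwiseDisjoint id ∧ P.biUnion id = s}

variable {s t u : Finset α} {k a b c : ℕ} {P Q R : Finset (Finset α)} {B : Finset α}

theorem mem_partitionsOn :
    P ∈ partitionsOn s k a ↔ #P = a ∧ (∀ B ∈ P, k ≤ #B) ∧
      (P : Set (Finset α)).PairwiseDisjoint id ∧ P.biUnion id = s := by
  simp only [partitionsOn, mem_filter, mem_powerset, and_iff_right_iff_imp]
  rintro ⟨-, -, -, rfl⟩ B hB
  exact mem_powerset.2 (subset_biUnion_of_mem id hB)

theorem subset_of_mem_partitionsOn (hP : P ∈ partitionsOn s k a) (hB : B ∈ P) : B ⊆ s :=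
  (mem_partitionsOn.1 hP).2.2.2 ▸ subset_biUnion_of_mem id hB

theorem disjoint_of_mem_partitionsOn (hk : 0 < k) (hQ : Q ∈ partitionsOn t k b)
    (hR : R ∈ partitionsOn u k c) (htu : Disjoint t u) : Disjoint Q R := by
  refine disjoint_left.2 fun B hBQ hBR => ?_
  have hB : B = ∅ := disjoint_self.1 <|
    htu.mono (subset_of_mem_partitionsOn hQ hBQ) (subset_of_mem_partitionsOn hR hBR)
  have hkB := (mem_partitionsOn.1 hQ).2.1 B hBQ
  rw [hB, card_empty] at hkB
  omega

theorem union_mem_partitionsOn (hk : 0 < k) (hQ : Q ∈ partitionsOn t k b)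
    (hR : R ∈ partitionsOn u k c) (htu : Disjoint t u) :
    Q ∪ R ∈ partitionsOn (t ∪ u) k (b + c) := by
  have hQR := disjoint_of_mem_partitionsOn hk hQ hR htu
  obtain ⟨hQcard, hQk, hQdisj, hQcov⟩ := mem_partitionsOn.1 hQ
  obtain ⟨hRcard, hRk, hRdisj, hRcov⟩ := mem_partitionsOn.1 hR
  refine mem_partitionsOn.2 ⟨by rw [card_union_of_disjoint hQR, hQcard, hRcard],
    forall_mem_union.2 ⟨hQk, hRk⟩, ?_, by rw [union_biUnion, hQcov, hRcov]⟩
  rw [coe_union, Set.pairwiseDisjoint_union]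
  exact ⟨hQdisj, hRdisj, fun B hB C hC _ => htu.mono
    (subset_of_mem_partitionsOn hQ hB) (subset_of_mem_partitionsOn hR hC)⟩

theorem sdiff_mem_partitionsOn (hP : P ∈ partitionsOn s k a) (hR : R ∈ partitionsOn u k c)
    (hRP : R ⊆ P) : P \ R ∈ partitionsOn (s \ u) k (a - c) := by
  obtain ⟨hPcard, hPk, hPdisj, hPcov⟩ := mem_partitionsOn.1 hP
  obtain ⟨hRcard, -, -, hRcov⟩ := mem_partitionsOn.1 hR
  have hcov : (P \ R).biUnion id ∪ u = s := by
    rw [← hRcov, ← union_biUnion, sdiff_union_of_subset hRP, hPcov]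
  have hdisj : Disjoint ((P \ R).biUnion id) u := by
    rw [← hRcov, disjoint_biUnion_left]
    intro B hB
    rw [disjoint_biUnion_right]
    intro C hC
    exact hPdisj (mem_sdiff.1 hB).1 (hRP hC) fun h => (mem_sdiff.1 hB).2 (h ▸ hC)
  refine mem_partitionsOn.2 ⟨by rw [card_sdiff_of_subset hRP, hPcard, hRcard],
    fun B hB => hPk B (mem_sdiff.1 hB).1, hPdisj.subset (by simp), ?_⟩
  rw [← hcov, union_sdiff_cancel_right hdisj]

theorem card_filter_superset_partitionsOn (hk : 0 < k) (hR : R ∈ partitionsOn u k c)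
    (hus : u ⊆ s) (hca : c ≤ a) :
    #{P ∈ partitionsOn s k a | R ⊆ P} = #(partitionsOn (s \ u) k (a - c)) := by
  refine card_nbij' (· \ R) (· ∪ R) (fun P hP => ?_) (fun Q hQ => ?_) (fun P hP => ?_)
    (fun Q hQ => ?_)
  · obtain ⟨hP, hRP⟩ := mem_filter.1 hP
    exact sdiff_mem_partitionsOn hP hR hRP
  · have hunion := union_mem_partitionsOn hk hQ hR disjoint_sdiff_self_left
    rw [sdiff_union_of_subset hus, Nat.sub_add_cancel hca] at hunion
    exact mem_filter.2 ⟨hunion, subset_union_right⟩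
  · exact sdiff_union_of_subset (mem_filter.1 hP).2
  · exact union_sdiff_cancel_right
      (disjoint_of_mem_partitionsOn hk hQ hR disjoint_sdiff_self_left)

theorem image_singleton_mem_partitionsOn (s : Finset α) :
    s.image singleton ∈ partitionsOn s 1 #s := by
  refine mem_partitionsOn.2 ⟨card_image_of_injective _ singleton_injective, by simp, ?_,
    by rw [image_biUnion]; exact biUnion_singleton_eq_self⟩
  rw [coe_image, singleton_injective.injOn.pairwiseDisjoint_image]
  intro x _ y _ hxy
  simpa using hxy

theorem map_mem_partitionsOn_map_iff (f : α ↪ β) :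
    P.map (mapEmbedding f).toEmbedding ∈ partitionsOn (s.map f) k a ↔ P ∈ partitionsOn s k a := by
  have hcov : (P.map (mapEmbedding f).toEmbedding).biUnion id = (P.biUnion id).map f := by
    ext; simp only [mem_biUnion, mem_map]; aesop
  simp only [mem_partitionsOn, card_map, forall_mem_map, RelEmbedding.coe_toEmbedding,
    mapEmbedding_apply, hcov, map_inj, coe_map]
  rw [(mapEmbedding f).injective.injOn.pairwiseDisjoint_image]
  simp [Set.PairwiseDisjoint, Set.Pairwise, Function.onFun]

theorem partitionsOn_map (f : α ↪ β) :
    partitionsOn (s.map f) k a = (partitionsOn s k a).image (map (mapEmbedding f).toEmbedding) := by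
  ext Q
  refine ⟨fun hQ => ?_, ?_⟩
  · have hQs : Q ⊆ s.powerset.map (mapEmbedding f).toEmbedding := fun B hB => by
      obtain ⟨C, hCs, rfl⟩ := subset_map_iff.1 (subset_of_mem_partitionsOn hQ hB)
      exact mem_map_of_mem _ (mem_powerset.2 hCs)
    obtain ⟨P, -, rfl⟩ := subset_map_iff.1 hQs
    exact mem_image_of_mem _ (map_mem_partitionsOn_map_iff f |>.1 hQ)
  · rw [mem_image]
    rintro ⟨P, hP, rfl⟩
    exact (map_mem_partitionsOn_map_iff f).2 hP

theorem card_partitionsOn_map (f : α ↪ β) :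
    #(partitionsOn (s.map f) k a) = #(partitionsOn s k a) := by
  rw [partitionsOn_map, card_image_of_injective _ (map_injective _)]

theorem forall_existsUnique_mem_iff [Fintype α] :
    (∀ x, ∃! B, B ∈ P ∧ x ∈ B) ↔
      (P : Set (Finset α)).PairwiseDisjoint id ∧ P.biUnion id = univ := by
  refine ⟨fun h => ⟨fun B hB C hC hBC => disjoint_left.2 fun x hxB hxC => hBC ?_,
    eq_univ_of_forall fun x => ?_⟩, fun ⟨hdisj, hcov⟩ x => ?_⟩
  · exact (h x).unique ⟨hB, hxB⟩ ⟨hC, hxC⟩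
  · obtain ⟨B, ⟨hB, hxB⟩, -⟩ := h x
    exact mem_biUnion.2 ⟨B, hB, hxB⟩
  · obtain ⟨B, hB, hxB⟩ := mem_biUnion.1 (hcov ▸ mem_univ x)
    exact ⟨B, ⟨hB, hxB⟩, fun C ⟨hC, hxC⟩ => hdisj.elim_finset hC hB x hxC hxB⟩

theorem ncard_setOf_eq_card_partitionsOn [Fintype α] (k a : ℕ) :
    {P : Finset (Finset α) | #P = a ∧ (∀ B ∈ P, k ≤ #B) ∧ ∀ x, ∃! B, B ∈ P ∧ x ∈ B}.ncard =
      #(partitionsOn (univ : Finset α) k a) := by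
  rw [← Set.ncard_coe_finset]
  congr 1
  ext P
  simp [mem_partitionsOn, forall_existsUnique_mem_iff]

theorem S_eq_card_partitionsOn (n a : ℕ) : S n a = #(partitionsOn (univ : Finset (Fin n)) 1 a) :=
  ncard_setOf_eq_card_partitionsOn 1 a

theorem S2_eq_card_partitionsOn (n a : ℕ) :
    S2 n a = #(partitionsOn (univ : Finset (Fin n)) 2 a) :=
  ncard_setOf_eq_card_partitionsOn 2 a

theorem card_partitionsOn_one_eq_S (s : Finset α) (a : ℕ) : #(partitionsOn s 1 a) = S #s a := by
  let f : Fin #s ↪ α := s.equivFin.symm.toEmbedding.trans (.subtype (· ∈ s))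
  have hf : univ.map f = s := by
    rw [← map_map, univ_map_equiv_to_embedding, univ_eq_attach, attach_map_val]
  rw [S_eq_card_partitionsOn, ← card_partitionsOn_map f, hf]

theorem card_filter_singleton_mem_le_card (s : Finset α) (P : Finset (Finset α)) :
    #{x ∈ s | {x} ∈ P} ≤ #P :=
  card_le_card_of_injOn singleton (fun _ hx => (mem_filter.1 hx).2) singleton_injective.injOn

theorem partitionsOn_two_eq_filter (s : Finset α) (a : ℕ) :
    partitionsOn s 2 a = {P ∈ partitionsOn s 1 a | #{x ∈ s | {x} ∈ P} = 0} := by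
  ext P
  simp only [mem_filter, mem_partitionsOn, card_eq_zero, filter_eq_empty_iff]
  refine ⟨fun ⟨hcard, hk, hdisj, hcov⟩ => ⟨⟨hcard, fun B hB => (hk B hB).trans' one_le_two,
    hdisj, hcov⟩, fun x _ hx => by simpa using hk {x} hx⟩, ?_⟩
  rintro ⟨⟨hcard, hk, hdisj, rfl⟩, hsingle⟩
  refine ⟨hcard, fun B hB => ?_, hdisj, rfl⟩
  by_contra! hB2
  obtain ⟨x, rfl⟩ := card_eq_one.1 (le_antisymm (Nat.le_of_lt_succ hB2) (hk B hB))
  exact hsingle (mem_biUnion.2 ⟨{x}, hB, mem_singleton_self x⟩) hB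

theorem sum_choose_card_filter_singleton_mem (s : Finset α) (hca : c ≤ a) :
    ∑ P ∈ partitionsOn s 1 a, (#{x ∈ s | {x} ∈ P}).choose c =
      (#s).choose c * S (#s - c) (a - c) := by
  calc ∑ P ∈ partitionsOn s 1 a, (#{x ∈ s | {x} ∈ P}).choose c
      = ∑ P ∈ partitionsOn s 1 a, #{E ∈ powersetCard c s | E.image singleton ⊆ P} := by
        refine sum_congr rfl fun P _ => ?_
        rw [← card_powersetCard]
        congr 1
        ext E
        rw [mem_filter, mem_powersetCard, mem_powersetCard, image_subset_iff]
        simp only [subset_iff, mem_filter, forall_and]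
        tauto
    _ = ∑ E ∈ powersetCard c s, #{P ∈ partitionsOn s 1 a | E.image singleton ⊆ P} := by
        simp_rw [card_filter]
        exact sum_comm
    _ = ∑ E ∈ powersetCard c s, S (#s - c) (a - c) := sum_congr rfl fun E hE => by
        obtain ⟨hEs, rfl⟩ := mem_powersetCard.1 hE
        rw [card_filter_superset_partitionsOn one_pos (image_singleton_mem_partitionsOn E) hEs hca,
          card_partitionsOn_one_eq_S, card_sdiff_of_subset hEs]
    _ = (#s).choose c * S (#s - c) (a - c) := by
        rw [sum_const, card_powersetCard, smul_eq_mul]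

theorem Int.alternating_sum_range_choose_of_le {m N : ℕ} (h : m ≤ N) :
    ∑ c ∈ Finset.range (N + 1), ((-1) ^ c * m.choose c : ℤ) = if m = 0 then 1 else 0 := by
  rw [← Int.alternating_sum_range_choose, eq_comm]
  refine sum_subset (range_subset_range.2 (by omega)) fun c _ hc => ?_
  rw [Nat.choose_eq_zero_of_lt (by simpa using hc), Nat.cast_zero, mul_zero]

theorem card_partitionsOn_two_eq_alternating_sum (s : Finset α) (a : ℕ) :
    (#(partitionsOn s 2 a) : ℤ) =
      ∑ c ∈ range (a + 1), (-1) ^ c * ((#s).choose c : ℤ) * S (#s - c) (a - c) := by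
  calc (#(partitionsOn s 2 a) : ℤ) = #{P ∈ partitionsOn s 1 a | #{x ∈ s | {x} ∈ P} = 0} := by
        rw [partitionsOn_two_eq_filter]
    _ = ∑ P ∈ partitionsOn s 1 a,
          ∑ c ∈ range (a + 1), (-1) ^ c * ((#{x ∈ s | {x} ∈ P}).choose c : ℤ) := by
        rw [← sum_boole]
        refine sum_congr rfl fun P hP => ?_
        rw [Int.alternating_sum_range_choose_of_le]
        exact (card_filter_singleton_mem_le_card _ _).trans (mem_partitionsOn.1 hP).1.le
    _ = ∑ c ∈ range (a + 1),
          (-1) ^ c * ∑ P ∈ partitionsOn s 1 a, ((#{x ∈ s | {x} ∈ P}).choose c : ℤ) := by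
        rw [sum_comm]
        simp_rw [mul_sum]
    _ = _ := sum_congr rfl fun c hc => by
        rw [← Nat.cast_sum, sum_choose_card_filter_singleton_mem s
          (Nat.lt_succ_iff.1 (mem_range.1 hc)), Nat.cast_mul, mul_assoc]

end

theorem S2_eq_alternating_sum_S_general (n a : ℕ) :
    (S2 n a : ℤ) =
      ∑ c ∈ Finset.range (a + 1), (-1 : ℤ) ^ c * (n.choose c : ℤ) * (S (n - c) (a - c) : ℤ) := by
  rw [S2_eq_card_partitionsOn, card_partitionsOn_two_eq_alternating_sum, card_univ,
    Fintype.card_fin]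

/-- For all `0 ≤ a ≤ n`,
`S2 n a = ∑_{c=0}^{a} (-1)^c * C(n,c) * S (n-c) (a-c)`. -/
theorem S2_eq_alternating_sum_S (n a : ℕ) (h : a ≤ n) :
    (S2 n a : ℤ) =
      ∑ c ∈ Finset.range (a + 1), (-1 : ℤ) ^ c * (n.choose c : ℤ) * (S (n - c) (a - c) : ℤ) :=
  S2_eq_alternating_sum_S_general n a
end

section
/- For finite subsets ω of ℝ^d, define x ⪯_ω y iff x belongs to the convex hull of ω ∪ {y}. Then ⪯_ω is reflexive and transitive; it is total on the convex hull C(ω) of ω; and it is antisymmetric on the complement of C(ω): if x, y ∉ C(ω), x ∈ convexHull(ω ∪ {y}) and y ∈ convexHull(ω ∪ {x}), then x = y. -/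
/-- For a finite subset `ω` of `ℝ^d`, define `x ⪯_ω y` iff
`x ∈ convexHull (ω ∪ {y})`.  This relation is reflexive and transitive; it is total
on the convex hull of `ω`; and it is antisymmetric on the complement of the convex
hull of `ω`. -/
theorem convexHull_relation_properties (d : ℕ) (ω : Finset (EuclideanSpace ℝ (Fin d))) :
    (∀ x : EuclideanSpace ℝ (Fin d),
      x ∈ convexHull ℝ ((↑ω : Set (EuclideanSpace ℝ (Fin d))) ∪ {x})) ∧
    (∀ x y z : EuclideanSpace ℝ (Fin d),
      x ∈ convexHull ℝ ((↑ω : Set (EuclideanSpace ℝ (Fin d))) ∪ {y}) →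
      y ∈ convexHull ℝ ((↑ω : Set (EuclideanSpace ℝ (Fin d))) ∪ {z}) →
        x ∈ convexHull ℝ ((↑ω : Set (EuclideanSpace ℝ (Fin d))) ∪ {z})) ∧
    (∀ x ∈ convexHull ℝ (↑ω : Set (EuclideanSpace ℝ (Fin d))),
      ∀ y ∈ convexHull ℝ (↑ω : Set (EuclideanSpace ℝ (Fin d))),
      x ∈ convexHull ℝ ((↑ω : Set (EuclideanSpace ℝ (Fin d))) ∪ {y}) ∨
        y ∈ convexHull ℝ ((↑ω : Set (EuclideanSpace ℝ (Fin d))) ∪ {x})) ∧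
    (∀ x y : EuclideanSpace ℝ (Fin d),
      x ∉ convexHull ℝ (↑ω : Set (EuclideanSpace ℝ (Fin d))) →
      y ∉ convexHull ℝ (↑ω : Set (EuclideanSpace ℝ (Fin d))) →
      x ∈ convexHull ℝ ((↑ω : Set (EuclideanSpace ℝ (Fin d))) ∪ {y}) →
      y ∈ convexHull ℝ ((↑ω : Set (EuclideanSpace ℝ (Fin d))) ∪ {x}) →
        x = y) := by
  refine ⟨?_, ?_, ?_, ?_⟩
  · intro x
    exact subset_convexHull ℝ _ (Set.mem_union_right _ rfl)
  · intro x y z hxy hyz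
    refine convexHull_min ?_ (convex_convexHull ℝ _) hxy
    rintro a (ha | ha)
    · exact subset_convexHull ℝ _ (Set.mem_union_left _ ha)
    · rw [Set.mem_singleton_iff.mp ha]; exact hyz
  · intro x hx y _
    exact Or.inl (convexHull_mono Set.subset_union_left hx)
  · intro x y hx hy hxy hyx
    rcases Set.eq_empty_or_nonempty (↑ω : Set (EuclideanSpace ℝ (Fin d))) with hω | hω
    · rw [hω, Set.empty_union, convexHull_singleton] at hxy
      exact hxy
    rw [Set.union_singleton, convexHull_insert hω, mem_convexJoin] at hxy hyx
    obtain ⟨y', hy', c, hc, hseg⟩ := hxy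
    obtain ⟨x', hx', c', hc', hseg'⟩ := hyx
    rw [Set.mem_singleton_iff] at hy' hx'
    rw [hy'] at hseg
    rw [hx'] at hseg'
    obtain ⟨a, b, ha, hb, hab, hxe⟩ := hseg
    obtain ⟨a', b', ha', hb', hab', hye⟩ := hseg'
    by_cases hb0 : b = 0
    · have : a = 1 := by linarith
      rw [hb0, this, one_smul, zero_smul, add_zero] at hxe
      exact hxe.symm
    by_cases hb0' : b' = 0
    · have : a' = 1 := by linarith
      rw [hb0', this, one_smul, zero_smul, add_zero] at hye
      exact hye
    exfalso
    have hbpos : 0 < b := lt_of_le_of_ne hb (Ne.symm hb0)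
    have hbpos' : 0 < b' := lt_of_le_of_ne hb' (Ne.symm hb0')
    have hlam : (0:ℝ) < 1 - a * a' := by nlinarith
    -- substitute y into x
    have key : (1 - a * a') • x = (a * b') • c' + b • c := by
      rw [← hye] at hxe
      linear_combination (norm := module) -hxe
    have hx_eq : x = ((a * b') / (1 - a * a')) • c' + (b / (1 - a * a')) • c := by
      have := congrArg (fun v => (1 - a * a')⁻¹ • v) key
      simp only [smul_smul, inv_mul_cancel₀ hlam.ne', one_smul, smul_add] at this
      rw [this, div_eq_inv_mul, div_eq_inv_mul]
    apply hx
    rw [hx_eq]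
    apply (convex_convexHull ℝ _) hc' hc
    · positivity
    · positivity
    · field_simp
      nlinarith
end

section
/- Let ω be a finite subset of ℝ^d with convex hull C(ω) and x, y ∈ ℝ^d with x, y ∉ C(ω). If x ∈ convexHull(ω ∪ {y}) and y ∈ convexHull(ω ∪ {x}), then x = y. -/
/-- Let `ω` be a finite subset of `ℝ^d` and `x, y ∉ convexHull ω`.  If
`x ∈ convexHull (ω ∪ {y})` and `y ∈ convexHull (ω ∪ {x})`, then `x = y`. -/
theorem convexHull_antisymm_outside (d : ℕ) (ω : Finset (EuclideanSpace ℝ (Fin d)))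
    (x y : EuclideanSpace ℝ (Fin d))
    (hx : x ∉ convexHull ℝ (↑ω : Set _)) (hy : y ∉ convexHull ℝ (↑ω : Set _))
    (hxy : x ∈ convexHull ℝ ((↑ω : Set _) ∪ {y}))
    (hyx : y ∈ convexHull ℝ ((↑ω : Set _) ∪ {x})) :
    x = y := by
  rcases Set.eq_empty_or_nonempty (↑ω : Set (EuclideanSpace ℝ (Fin d))) with hω | hω
  · rw [hω, Set.empty_union, convexHull_singleton] at hxy
    exact hxy
  · rw [Set.union_comm, ← Set.insert_eq, convexHull_insert hω, mem_convexJoin] at hxy hyx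
    obtain ⟨y', hy', a, ha, p', p, hp', hp, hpsum, hxeq⟩ := hxy
    obtain ⟨x', hx', b, hb, q', q, hq', hq, hqsum, hyeq⟩ := hyx
    rw [Set.mem_singleton_iff] at hy' hx'
    rw [hy'] at hxeq
    rw [hx'] at hyeq
    -- x = p' • y + p • a, y = q' • x + q • b
    have hC : Convex ℝ (convexHull ℝ (↑ω : Set (EuclideanSpace ℝ (Fin d)))) :=
      convex_convexHull ℝ _
    by_cases hcase : p' * q' = 1
    · have hp1 : p' = 1 := by nlinarith
      have hp0 : p = 0 := by linarith
      rw [hp1, hp0, one_smul, zero_smul, add_zero] at hxeq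
      exact hxeq.symm
    · exfalso
      have hlt : p' * q' < 1 := lt_of_le_of_ne (by nlinarith) hcase
      have hpos : 0 < 1 - p' * q' := by linarith
      -- x = p' • (q' • x + q • b) + p • a
      have key : (1 - p' * q') • x = (p' * q) • b + p • a := by
        linear_combination (norm := module) (-1 : ℝ) • hxeq - p' • hyeq
      have hxmem : x = ((1 - p' * q')⁻¹ * (p' * q)) • b + ((1 - p' * q')⁻¹ * p) • a := by
        have := congrArg (fun z => (1 - p' * q')⁻¹ • z) key
        simpa [smul_smul, inv_mul_cancel₀ hpos.ne', smul_add] using this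
      apply hx
      rw [hxmem]
      refine hC hb ha ?_ ?_ ?_
      · positivity
      · positivity
      · field_simp
        nlinarith
end

section
/- Let u : Ω × X → ℝ where Ω is the set of finite subsets of X, and set D_s u_t(ω) = u_t(ω ∪ {s}) − u_t(ω). Fix j ≥ 1 and pairwise distinct t_0, …, t_j ∈ X. Suppose the cyclic vanishing condition holds: for every m ≥ 1 and every sequence of indices i_0, i_1, …, i_m with i_0 = i_m forming a cycle among {0,…,j}, the product D_{t_{i_1}} u_{t_{i_0}} · D_{t_{i_2}} u_{t_{i_1}} ⋯ D_{t_{i_0}} u_{t_{i_{m-1}}} vanishes identically. Then for every family (Θ_0, …, Θ_j) of pairwise disjoint nonempty subsets with Θ_0 ∪ ⋯ ∪ Θ_j = {t_0, …, t_j} and t_p ∉ Θ_p for each p, the product ∏_{p=0}^{j} D_{Θ_p} u_{t_p} vanishes identically, where D_Θ = ∏_{s ∈ Θ} D_s. -/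
/-- `DD Θ F ω` is the iterated finite difference `(∏_{s ∈ Θ} D_s) F` evaluated at `ω`,
where `D_s F (ω) = F (ω ∪ {s}) - F ω`, written in closed form via
inclusion-exclusion: `D_Θ F (ω) = ∑_{A ⊆ Θ} (-1)^{|Θ| - |A|} F (ω ∪ A)`. -/
noncomputable def DD {X : Type*} [DecidableEq X] (Θ : Finset X) (F : Finset X → ℝ)
    (ω : Finset X) : ℝ :=
  ∑ A ∈ Θ.powerset, (-1 : ℝ) ^ (Θ.card - A.card) * F (ω ∪ A)

/-!
Counting cardinalities, the disjoint nonempty sets `Θ_p` covering the `j + 1` points `t_q` are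
singletons, `Θ_p = {t_{π p}}` for a permutation `π`, so the product is `∏_p D_{t_{π p}} u_{t_p}`.
Following the cycle of `π` through any index gives a cyclic product, which vanishes; hence one of
its factors vanishes, and that factor also occurs in `∏_p D_{t_{π p}} u_{t_p}`.
-/

open Finset Function

lemma DD_singleton {X : Type*} [DecidableEq X] (s : X) (F : Finset X → ℝ) (ω : Finset X) :
    DD {s} F ω = F (insert s ω) - F ω := by
  have hps : ({s} : Finset X).powerset = {∅, {s}} := rfl
  rw [DD, hps, sum_pair (singleton_ne_empty s).symm]
  simp only [card_singleton, card_empty, tsub_zero, tsub_self, union_empty,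
    insert_eq, union_comm {s} ω]
  ring

lemma card_eq_one_of_pairwise_disjoint_of_card_sup {ι α : Type*} [Fintype ι] [DecidableEq α]
    {Θ : ι → Finset α} (hdisj : Pairwise (Disjoint on Θ)) (hne : ∀ p, (Θ p).Nonempty)
    (hcard : (univ.sup Θ).card = Fintype.card ι) (p : ι) : (Θ p).card = 1 := by
  have hsum : ∑ q, (Θ q).card = ∑ _q : ι, 1 := by
    rw [← card_biUnion (fun p _ q _ hpq => hdisj hpq), ← sup_eq_biUnion, hcard,
      sum_const, card_univ, smul_eq_mul, mul_one]
  exact ((sum_eq_sum_iff_of_le fun q _ => (hne q).card_pos).mp hsum.symm p (mem_univ p)).symm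

lemma exists_perm_eq_singleton {ι α : Type*} [Fintype ι] [DecidableEq α] {t : ι → α}
    (ht : Injective t) {Θ : ι → Finset α} (hdisj : Pairwise (Disjoint on Θ))
    (hne : ∀ p, (Θ p).Nonempty) (hunion : univ.sup Θ = univ.image t) :
    ∃ π : Equiv.Perm ι, ∀ p, Θ p = {t (π p)} := by
  have hcard : (univ.sup Θ).card = Fintype.card ι := by
    rw [hunion, card_image_of_injective _ ht, card_univ]
  have hsingleton (p : ι) : ∃ q, Θ p = {t q} := by
    obtain ⟨a, ha⟩ := card_eq_one.mp
      (card_eq_one_of_pairwise_disjoint_of_card_sup hdisj hne hcard p)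
    have hmem : a ∈ univ.image t := hunion ▸ le_sup (f := Θ) (mem_univ p) (by simp [ha])
    obtain ⟨q, -, rfl⟩ := mem_image.mp hmem
    exact ⟨q, ha⟩
  choose σ hσ using hsingleton
  have hσinj : Injective σ := by
    intro p q hpq
    by_contra hne'
    exact disjoint_left.mp (hdisj hne') (show t (σ p) ∈ Θ p by simp [hσ p])
      (by simp [hσ q, hpq])
  exact ⟨Equiv.ofBijective σ (Finite.injective_iff_bijective.mp hσinj), hσ⟩

lemma prod_apply_perm_eq_zero_of_cycle_prod_eq_zero {ι M : Type*} [Fintype ι] [Nonempty ι]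
    [CommMonoidWithZero M] [NoZeroDivisors M] [Nontrivial M] {g : ι → ι → M}
    (hcyc : ∀ m : ℕ, 1 ≤ m → ∀ i : ℕ → ι, i 0 = i m →
      ∏ l ∈ range m, g (i l) (i (l + 1)) = 0)
    (π : Equiv.Perm ι) : ∏ p, g p (π p) = 0 := by
  let x : ι := Classical.arbitrary ι
  have horbit := hcyc (orderOf π) (orderOf_pos π) (fun l => (π ^ l) x)
    (by simp [pow_orderOf_eq_one])
  obtain ⟨l, -, hl⟩ := prod_eq_zero_iff.mp horbit
  rw [pow_succ', Equiv.Perm.mul_apply] at hl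
  exact prod_eq_zero (mem_univ _) hl

theorem cyclic_condition_implies_product_vanishes_general (X : Type*) [DecidableEq X]
    (u : Finset X → X → ℝ) (j : ℕ)
    (t : Fin (j + 1) → X) (ht : Function.Injective t)
    (hcyc : ∀ m : ℕ, 1 ≤ m → ∀ i : ℕ → Fin (j + 1), i 0 = i m →
      ∀ ω : Finset X,
        ∏ l ∈ Finset.range m,
          (u (insert (t (i (l + 1))) ω) (t (i l)) - u ω (t (i l))) = 0)
    (Θ : Fin (j + 1) → Finset X)
    (hdisj : ∀ p q : Fin (j + 1), p ≠ q → Disjoint (Θ p) (Θ q))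
    (hne : ∀ p, (Θ p).Nonempty)
    (hunion : Finset.univ.sup Θ = Finset.image t Finset.univ) :
    ∀ ω : Finset X, ∏ p : Fin (j + 1), DD (Θ p) (fun ω' => u ω' (t p)) ω = 0 := by
  intro ω
  obtain ⟨π, hπ⟩ := exists_perm_eq_singleton ht (fun p q => hdisj p q) hne hunion
  simp only [hπ, DD_singleton]
  exact prod_apply_perm_eq_zero_of_cycle_prod_eq_zero
    (g := fun p q => u (insert (t q) ω) (t p) - u ω (t p)) (fun m hm i hi => hcyc m hm i hi ω) π

/-- If the process `u` satisfies the cyclic vanishing condition (every cyclic product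
`D_{t_{i_1}} u_{t_{i_0}} ⋯ D_{t_{i_0}} u_{t_{i_{m-1}}}` vanishes identically), then for
every family `(Θ_0, …, Θ_j)` of pairwise disjoint nonempty sets covering `{t_0, …, t_j}`
with `t_p ∉ Θ_p`, the product `∏_p D_{Θ_p} u_{t_p}` vanishes identically. -/
theorem cyclic_condition_implies_product_vanishes (X : Type*) [DecidableEq X]
    (u : Finset X → X → ℝ) (j : ℕ) (hj : 1 ≤ j)
    (t : Fin (j + 1) → X) (ht : Function.Injective t)
    (hcyc : ∀ m : ℕ, 1 ≤ m → ∀ i : ℕ → Fin (j + 1), i 0 = i m →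
      ∀ ω : Finset X,
        ∏ l ∈ Finset.range m,
          (u (insert (t (i (l + 1))) ω) (t (i l)) - u ω (t (i l))) = 0)
    (Θ : Fin (j + 1) → Finset X)
    (hdisj : ∀ p q : Fin (j + 1), p ≠ q → Disjoint (Θ p) (Θ q))
    (hne : ∀ p, (Θ p).Nonempty)
    (hunion : Finset.univ.sup Θ = Finset.image t Finset.univ)
    (hnotmem : ∀ p, t p ∉ Θ p) :
    ∀ ω : Finset X, ∏ p : Fin (j + 1), DD (Θ p) (fun ω' => u ω' (t p)) ω = 0 :=
  cyclic_condition_implies_product_vanishes_general X u j t ht hcyc Θ hdisj hne hunion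
end

section
/- Given pairwise disjoint nonempty sets Θ_0, …, Θ_j covering {t_0, …, t_j} with t_p ∉ Θ_p for each p, where t_0, …, t_j are distinct, there exist an integer i ∈ {2, …, j+1} and indices k_1, …, k_{i-1} ∈ {1, …, j}, pairwise distinct, such that t_{k_1} ∈ Θ_0, t_{k_2} ∈ Θ_{k_1}, …, t_{k_{i-1}} ∈ Θ_{k_{i-2}}, and t_0 ∈ Θ_{k_{i-1}}, i.e. the map p ↦ Θ_p contains a cycle through index 0. -/
/-- Given pairwise disjoint nonempty sets `Θ_0, …, Θ_j` covering `{t_0, …, t_j}` with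
`t_p ∉ Θ_p` for each `p` (the `t_p` distinct), there exist `i ∈ {2, …, j+1}` and pairwise
distinct nonzero indices `k_1, …, k_{i-1}` with `t (k 1) ∈ Θ 0`, `t (k l) ∈ Θ (k (l-1))`
for `2 ≤ l ≤ i-1`, and `t 0 ∈ Θ (k (i-1))`: the family contains a cycle through index 0. -/
theorem partition_family_contains_cycle (X : Type*) [DecidableEq X]
    (j : ℕ) (t : Fin (j + 1) → X) (ht : Function.Injective t)
    (Θ : Fin (j + 1) → Finset X)
    (hdisj : ∀ p q : Fin (j + 1), p ≠ q → Disjoint (Θ p) (Θ q))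
    (hne : ∀ p, (Θ p).Nonempty)
    (hunion : Finset.univ.sup Θ = Finset.image t Finset.univ)
    (hnotmem : ∀ p, t p ∉ Θ p) :
    ∃ i : ℕ, 2 ≤ i ∧ i ≤ j + 1 ∧
      ∃ k : ℕ → Fin (j + 1),
        (∀ l : ℕ, 1 ≤ l → l ≤ i - 1 → k l ≠ 0) ∧
        (∀ l l' : ℕ, 1 ≤ l → 1 ≤ l' → l ≤ i - 1 → l' ≤ i - 1 → l ≠ l' → k l ≠ k l') ∧
        t (k 1) ∈ Θ 0 ∧
        (∀ l : ℕ, 2 ≤ l → l ≤ i - 1 → t (k l) ∈ Θ (k (l - 1))) ∧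
        t 0 ∈ Θ (k (i - 1)) := by
  classical
  -- Each Θ p contains some t q
  have hsub : ∀ p, Θ p ⊆ Finset.image t Finset.univ := by
    intro p
    rw [← hunion]
    exact Finset.le_sup (f := Θ) (Finset.mem_univ p)
  have hex : ∀ p, ∃ q, t q ∈ Θ p := by
    intro p
    obtain ⟨x, hx⟩ := hne p
    obtain ⟨q, -, hq⟩ := Finset.mem_image.1 (hsub p hx)
    exact ⟨q, hq ▸ hx⟩
  set f : Fin (j + 1) → Fin (j + 1) := fun p => (hex p).choose with hfdef
  have hf : ∀ p, t (f p) ∈ Θ p := fun p => (hex p).choose_spec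
  have hinj : Function.Injective f := by
    intro p q h
    by_contra hpq
    exact Finset.disjoint_left.1 (hdisj p q hpq) (hf p) (h ▸ hf q)
  have hnofix : ∀ p, f p ≠ p := by
    intro p h
    have := hf p
    rw [h] at this
    exact hnotmem p this
  -- injectivity of iterates
  have hiterinj : ∀ n, Function.Injective (f^[n]) := fun n => hinj.iterate n
  -- the orbit of 0 returns: find a,b distinct with equal iterates
  have hret : ∃ m, 0 < m ∧ f^[m] (0 : Fin (j + 1)) = 0 := by
    have hcard : Fintype.card (Fin (j + 1)) < Fintype.card (Fin (j + 2)) := by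
      simp
    obtain ⟨a, b, hab, heq⟩ :=
      Fintype.exists_ne_map_eq_of_card_lt
        (fun l : Fin (j + 2) => f^[(l : ℕ)] (0 : Fin (j + 1))) hcard
    rcases lt_or_gt_of_ne (fun h : (a : ℕ) = (b : ℕ) => hab (Fin.ext h)) with h | h
    · refine ⟨(b : ℕ) - (a : ℕ), by omega, ?_⟩
      apply hiterinj (a : ℕ)
      rw [← Function.iterate_add_apply, Nat.add_sub_cancel' (le_of_lt h)]
      exact heq.symm
    · refine ⟨(a : ℕ) - (b : ℕ), by omega, ?_⟩
      apply hiterinj (b : ℕ)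
      rw [← Function.iterate_add_apply, Nat.add_sub_cancel' (le_of_lt h)]
      exact heq
  set i := Nat.find hret with hidef
  obtain ⟨hipos, hispec⟩ : 0 < i ∧ f^[i] (0 : Fin (j + 1)) = 0 := Nat.find_spec hret
  have hmin : ∀ m, 0 < m → m < i → f^[m] (0 : Fin (j + 1)) ≠ 0 := by
    intro m hm hmi h
    exact Nat.find_min hret hmi ⟨hm, h⟩
  have hi2 : 2 ≤ i := by
    by_contra h
    push_neg at h
    have h1 : i = 1 := by omega
    rw [h1] at hispec
    simp only [Function.iterate_one] at hispec
    exact hnofix 0 hispec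
  have hile : i ≤ j + 1 := by
    -- the iterates f^[0] 0, ..., f^[i-1] 0 are pairwise distinct
    by_contra hgt
    push_neg at hgt
    have hd : Function.Injective (fun l : Fin i => f^[(l : ℕ)] (0 : Fin (j + 1))) := by
      intro a b h
      simp only at h
      by_contra hab
      rcases lt_or_gt_of_ne (fun hh : (a : ℕ) = (b : ℕ) => hab (Fin.ext hh)) with hlt | hlt
      · exact hmin ((b : ℕ) - a) (by omega) (by omega)
          (hiterinj a (by rw [← Function.iterate_add_apply,
            Nat.add_sub_cancel' (le_of_lt hlt)]; exact h.symm))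
      · exact hmin ((a : ℕ) - b) (by omega) (by omega)
          (hiterinj b (by rw [← Function.iterate_add_apply,
            Nat.add_sub_cancel' (le_of_lt hlt)]; exact h))
    have := Fintype.card_le_of_injective _ hd
    simp at this
    omega
  refine ⟨i, hi2, hile, fun l => f^[l] (0 : Fin (j + 1)), ?_, ?_, ?_, ?_, ?_⟩
  · intro l hl1 hl2
    exact hmin l (by omega) (by omega)
  · intro l l' hl1 hl'1 hl2 hl'2 hll'
    intro h
    rcases lt_or_gt_of_ne hll' with hlt | hlt
    · exact hmin (l' - l) (by omega) (by omega)
        (hiterinj l (by rw [← Function.iterate_add_apply,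
          Nat.add_sub_cancel' (le_of_lt hlt)]; exact h.symm))
    · exact hmin (l - l') (by omega) (by omega)
        (hiterinj l' (by rw [← Function.iterate_add_apply,
          Nat.add_sub_cancel' (le_of_lt hlt)]; exact h))
  · simpa using hf 0
  · intro l hl1 hl2
    show t (f^[l] (0 : Fin (j + 1))) ∈ Θ (f^[l - 1] 0)
    have : f^[l] (0 : Fin (j + 1)) = f (f^[l - 1] 0) := by
      conv_lhs => rw [show l = (l - 1) + 1 by omega]
      rw [Function.iterate_succ_apply']
    rw [this]
    exact hf _
  · show t 0 ∈ Θ (f^[i - 1] (0 : Fin (j + 1)))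
    have heq : f^[i] (0 : Fin (j + 1)) = f (f^[i - 1] 0) := by
      conv_lhs => rw [show i = (i - 1) + 1 by omega]
      rw [Function.iterate_succ_apply']
    rw [heq] at hispec
    have := hf (f^[i - 1] (0 : Fin (j + 1)))
    rwa [hispec] at this
end

section
/- Let Ω be the set of finite subsets of X, D_s F(ω) = F(ω ∪ {s}) − F(ω), and for a process u : Ω × X → ℝ define the operator Δ on products by Δ_{s_0} ⋯ Δ_{s_j} ∏_{p=0}^{n} u_{s_p} = Σ over families (Θ_0, …, Θ_n) with Θ_0 ∪ ⋯ ∪ Θ_n = {s_0, …, s_j} and s_p ∉ Θ_p for 0 ≤ p ≤ j, of ∏_{p=0}^{n} D_{Θ_p} u_{s_p}. Then for pairwise distinct s_0, …, s_n and 0 ≤ j ≤ n, one has ∏_{p=0}^{n} (ε⁺_{S_j \ {s_p}} u_{s_p}) = ( ∏_{i=0}^{j} (I + Δ_{s_i}) ) ∏_{p=0}^{n} u_{s_p}, where S_j = {s_0, …, s_j} and ε⁺_A F(ω) = F(ω ∪ A). -/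
/-!
Summing the `Δ`-monomials over all `J ⊆ S_j` removes the covering constraint `⋃_p Θ_p = J`,
so the sum factors as `∏_p ∑_{Θ ⊆ S_j \ {s_p}} D_Θ u_{s_p}`. Each factor telescopes
(Möbius inversion on the Boolean lattice: `∑_{A ⊆ T} D_A F = ε⁺_T F`) to
`ε⁺_{S_j \ {s_p}} u_{s_p}`.
-/

open Finset

/-- `DeltaProd u s J ω` is `Δ_{s_i, i ∈ J} ∏_p u_{s_p}` evaluated at `ω`: the sum over
all families `(Θ_p)_p` of subsets (encoded by index sets) with `⋃_p Θ_p = {s_i : i ∈ J}`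
and `s_p ∉ Θ_p` for `p ∈ J`, of `∏_p D_{Θ_p} u_{s_p}`. -/
noncomputable def DeltaProd {X : Type*} [DecidableEq X] (u : Finset X → X → ℝ)
    {m : ℕ} (s : Fin m → X) (J : Finset (Fin m)) (ω : Finset X) : ℝ :=
  ∑ Θ ∈ (Finset.univ : Finset (Fin m → Finset (Fin m))).filter
      (fun Θ => Finset.univ.sup Θ = J ∧ ∀ p ∈ J, p ∉ Θ p),
    ∏ p : Fin m, DD ((Θ p).image s) (fun ω' => u ω' (s p)) ω

lemma DD_insert {X : Type*} [DecidableEq X] {a : X} {A : Finset X} (ha : a ∉ A)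
    (F : Finset X → ℝ) (ω : Finset X) :
    DD (insert a A) F ω = DD A (fun ω' => F (insert a ω')) ω - DD A F ω := by
  unfold DD
  rw [sum_powerset_insert ha, card_insert_of_notMem ha, sub_eq_add_neg, add_comm,
    ← sum_neg_distrib]
  congr 1
  · refine sum_congr rfl fun B hB => ?_
    have haB : a ∉ B := fun h => ha (mem_powerset.1 hB h)
    rw [card_insert_of_notMem haB, Nat.add_sub_add_right, union_insert]
  · refine sum_congr rfl fun B hB => ?_
    rw [Nat.succ_sub (card_le_card (mem_powerset.1 hB)), pow_succ]
    ring

theorem sum_powerset_DD {X : Type*} [DecidableEq X] (T : Finset X) (F : Finset X → ℝ)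
    (ω : Finset X) : ∑ A ∈ T.powerset, DD A F ω = F (ω ∪ T) := by
  induction T using Finset.induction_on generalizing F with
  | empty => simp [DD]
  | @insert a T ha ih =>
    rw [sum_powerset_insert ha]
    have hDD : ∀ A ∈ T.powerset,
        DD (insert a A) F ω = DD A (fun ω' => F (insert a ω')) ω - DD A F ω :=
      fun A hA => DD_insert (fun h => ha (mem_powerset.1 hA h)) F ω
    rw [sum_congr rfl hDD, sum_sub_distrib, ih, ih, union_insert]
    ring

theorem sum_powerset_DD_image {ι X : Type*} [DecidableEq ι] [DecidableEq X] {s : ι → X}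
    (hs : Function.Injective s) (T : Finset ι) (F : Finset X → ℝ) (ω : Finset X) :
    ∑ A ∈ T.powerset, DD (A.image s) F ω = F (ω ∪ T.image s) := by
  rw [← sum_powerset_DD (T.image s) F ω, powerset_image,
    sum_image fun _ _ _ _ h => image_injective hs h]

theorem sum_powerset_DeltaProd {X : Type*} [DecidableEq X] (u : Finset X → X → ℝ) {m : ℕ}
    (s : Fin m → X) (T : Finset (Fin m)) (ω : Finset X) :
    ∑ J ∈ T.powerset, DeltaProd u s J ω
      = ∑ Θ ∈ Fintype.piFinset fun p => (T.erase p).powerset,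
          ∏ p, DD ((Θ p).image s) (fun ω' => u ω' (s p)) ω := by
  have hsup : ∀ Θ ∈ Fintype.piFinset fun p => (T.erase p).powerset,
      univ.sup Θ ∈ T.powerset := fun Θ hΘ => mem_powerset.2 <| Finset.sup_le fun p _ =>
    (mem_powerset.1 (Fintype.mem_piFinset.1 hΘ p)).trans (erase_subset p T)
  rw [← sum_fiberwise_of_maps_to hsup]
  refine sum_congr rfl fun J hJ => sum_congr ?_ fun _ _ => rfl
  ext Θ
  simp only [mem_filter, Fintype.mem_piFinset, mem_powerset, mem_univ, true_and]
  constructor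
  · rintro ⟨hΘJ, hp⟩
    refine ⟨fun p q hq => ?_, hΘJ⟩
    have hqJ : q ∈ J := hΘJ ▸ mem_sup.2 ⟨p, mem_univ p, hq⟩
    exact mem_erase.2 ⟨fun hqp => hp q hqJ (hqp ▸ hq), mem_powerset.1 hJ hqJ⟩
  · rintro ⟨hΘ, hΘJ⟩
    exact ⟨hΘJ, fun p _ hp => (mem_erase.1 (hΘ p hp)).1 rfl⟩

theorem eps_product_eq_sum_DeltaProd_general (X : Type*) [DecidableEq X]
    (u : Finset X → X → ℝ) (n j : ℕ)
    (s : Fin (n + 1) → X) (hs : Function.Injective s) :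
    ∀ ω : Finset X,
      (∏ p : Fin (n + 1),
        u (ω ∪ ((Finset.image s (Finset.univ.filter fun i : Fin (n + 1) => (i : ℕ) ≤ j)).erase
            (s p))) (s p))
        = ∑ J ∈ (Finset.univ.filter fun i : Fin (n + 1) => (i : ℕ) ≤ j).powerset,
            DeltaProd u s J ω := by
  intro ω
  set S := (Finset.univ.filter fun i : Fin (n + 1) => (i : ℕ) ≤ j)
  rw [sum_powerset_DeltaProd, ← prod_univ_sum (t := fun p => (S.erase p).powerset)
    (f := fun p A => DD (A.image s) (fun ω' => u ω' (s p)) ω)]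
  refine prod_congr rfl fun p _ => ?_
  rw [sum_powerset_DD_image hs, image_erase hs]

/-- For pairwise distinct `s_0, …, s_n` and `0 ≤ j ≤ n`, one has
`∏_{p=0}^{n} ε⁺_{S_j \ {s_p}} u_{s_p} = (∏_{i=0}^{j} (I + Δ_{s_i})) ∏_{p=0}^{n} u_{s_p}`,
where `S_j = {s_0, …, s_j}` and the right-hand side is expanded as the sum of
`Δ`-monomials over subsets `J ⊆ {0, …, j}`. -/
theorem eps_product_eq_sum_DeltaProd (X : Type*) [DecidableEq X]
    (u : Finset X → X → ℝ) (n j : ℕ) (hj : j ≤ n)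
    (s : Fin (n + 1) → X) (hs : Function.Injective s) :
    ∀ ω : Finset X,
      (∏ p : Fin (n + 1),
        u (ω ∪ ((Finset.image s (Finset.univ.filter fun i : Fin (n + 1) => (i : ℕ) ≤ j)).erase
            (s p))) (s p))
        = ∑ J ∈ (Finset.univ.filter fun i : Fin (n + 1) => (i : ℕ) ≤ j).powerset,
            DeltaProd u s J ω :=
  eps_product_eq_sum_DeltaProd_general X u n j s hs
end
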